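/- Let n ≥ 1 and let w be a weight function on {1,…,n} such that for each pair of distinct indices i, j exactly one of the following holds: (i) exactly one of the directed edges i→j, j→i is present and it has weight 1, or (ii) both directed edges i→j and j→i are present, each of weight −1. If this weighted digraph contains an m-ascending directed cycle (one of nonnegative total weight), then it contains an m-ascending directed cycle of length at most 4. -/

import Mathlib

/-- Cyclically consecutive pairs along a list of vertices. -/
def cpairs {n : ℕ} (c : List (Fin n)) : List (Fin n × Fin n) := c.zip (c.rotate 1)

/-- `c` is a directed cycle of the weighted digraph `w`, an edge `u → v`
being present when `w u v ≠ ⊥` (`⊥` stands for `-∞`). -/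
def IsCycle {n : ℕ} (w : Fin n → Fin n → WithBot ℝ) (c : List (Fin n)) : Prop :=
  2 ≤ c.length ∧ c.Nodup ∧ ∀ p ∈ cpairs c, w p.1 p.2 ≠ ⊥

/-- Total weight of the edges of a cycle. -/
def cycWeight {n : ℕ} (w : Fin n → Fin n → WithBot ℝ) (c : List (Fin n)) : WithBot ℝ :=
  ((cpairs c).map fun p => w p.1 p.2).sum

/-- An `m`-ascending cycle: a directed cycle of nonnegative total weight. -/
def MAscending {n : ℕ} (w : Fin n → Fin n → WithBot ℝ) (c : List (Fin n)) : Prop :=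
  IsCycle w c ∧ 0 ≤ cycWeight w c

/-!
Take a shortest m-ascending cycle and suppose it has at least five vertices. For four consecutive
vertices `u, x₁, x₂, v` of it, `u` and `v` are joined by an edge: `u → v` shortcuts the cycle past
`x₁, x₂`, and `v → u` closes the 4-cycle `u x₁ x₂ v`. Both cycles are shorter, hence of negative
weight, and since all weights are `±1` this forces the three edges `u → x₁ → x₂ → v` to be all `+1`
(with total weight `< 2`) or all `-1`. Sliding the window around the cycle, all its edges carry
the same weight, which is incompatible with a total weight in `[0, 2)` on at least five edges.
-/

open List

def IsSemiorderWeight {n : ℕ} (w : Fin n → Fin n → WithBot ℝ) : Prop :=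
  ∀ i j : Fin n, i < j →
    ((w i j = ((1 : ℝ) : WithBot ℝ) ∧ w j i = ⊥) ∨
     (w i j = ⊥ ∧ w j i = ((1 : ℝ) : WithBot ℝ)) ∨
     (w i j = ((-1 : ℝ) : WithBot ℝ) ∧ w j i = ((-1 : ℝ) : WithBot ℝ)))

lemma List.getElem_eq_getElem_succ_of_rotate_eq {α : Type*} {l : List α} {k : ℕ}
    (hk : k + 1 < l.length) {e : α} {r : List α} (h : l.rotate k = e :: e :: r) :
    l[k] = l[k + 1] := by
  have h₀ : (l.rotate k)[0]? = some e := by rw [h]; rfl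
  have h₁ : (l.rotate k)[1]? = some e := by rw [h]; rfl
  rw [getElem?_rotate (by omega), Nat.zero_add, Nat.mod_eq_of_lt (by omega)] at h₀
  rw [getElem?_rotate (by omega), Nat.add_comm, Nat.mod_eq_of_lt hk] at h₁
  rw [getElem?_eq_getElem (by omega), Option.some_inj] at h₀ h₁
  rw [h₀, h₁]

lemma three_signs {a b d : ℝ} (ha : a = 1 ∨ a = -1) (hb : b = 1 ∨ b = -1)
    (hd : d = 1 ∨ d = -1) :
    (a = 1 ∧ b = 1 ∧ d = 1) ∨ (a = -1 ∧ b = -1 ∧ d = -1) ∨ a + b + d = 1 ∨ a + b + d = -1 := by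
  rcases ha with rfl | rfl <;> rcases hb with rfl | rfl <;> rcases hd with rfl | rfl <;> norm_num

section

variable {n : ℕ} {w : Fin n → Fin n → WithBot ℝ}

/-- The real weight of an edge; the junk value `0` on absent edges. -/
noncomputable def edgeWeight (w : Fin n → Fin n → WithBot ℝ) (i j : Fin n) : ℝ :=
  (w i j).unbotD 0

noncomputable def edgeWeights (w : Fin n → Fin n → WithBot ℝ) (c : List (Fin n)) : List ℝ :=
  (cpairs c).map fun p => edgeWeight w p.1 p.2

noncomputable def pathWeight (w : Fin n → Fin n → WithBot ℝ) : List (Fin n) → ℝ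
  | a :: b :: l => edgeWeight w a b + pathWeight w (b :: l)
  | _ => 0

lemma coe_edgeWeight {i j : Fin n} (h : w i j ≠ ⊥) : (edgeWeight w i j : WithBot ℝ) = w i j := by
  obtain ⟨x, hx⟩ := WithBot.ne_bot_iff_exists.mp h
  simp [edgeWeight, ← hx]

lemma edgeWeight_of_eq {i j : Fin n} {x : ℝ} (h : w i j = x) : edgeWeight w i j = x := by
  simp [edgeWeight, h]

lemma IsSemiorderWeight.of_ne (hw : IsSemiorderWeight w) {i j : Fin n} (hij : i ≠ j) :
    (w i j = ((1 : ℝ) : WithBot ℝ) ∧ w j i = ⊥) ∨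
    (w i j = ⊥ ∧ w j i = ((1 : ℝ) : WithBot ℝ)) ∨
    (w i j = ((-1 : ℝ) : WithBot ℝ) ∧ w j i = ((-1 : ℝ) : WithBot ℝ)) := by
  rcases hij.lt_or_gt with h | h
  · exact hw i j h
  · rcases hw j i h with h' | h' | h' <;> simp [h']

lemma IsSemiorderWeight.edgeWeight_eq_one_or_neg_one (hw : IsSemiorderWeight w) {i j : Fin n}
    (hij : i ≠ j) (h : w i j ≠ ⊥) : edgeWeight w i j = 1 ∨ edgeWeight w i j = -1 := by
  rcases hw.of_ne hij with ⟨h', -⟩ | ⟨h', -⟩ | ⟨h', -⟩ <;> simp_all [edgeWeight]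

lemma cpairs_cons (u : Fin n) (l : List (Fin n)) : cpairs (u :: l) = (u :: l).zip (l ++ [u]) := by
  simp [cpairs, rotate_cons_succ]

lemma cpairs_rotate_one (l : List (Fin n)) : cpairs (l.rotate 1) = (cpairs l).rotate 1 := by
  apply ext_getElem
  · simp [cpairs]
  · intro i _ _
    simp only [cpairs, getElem_zip, getElem_rotate, rotate_rotate, length_zip, length_rotate,
      min_self, Nat.mod_add_mod]

lemma cpairs_rotate (l : List (Fin n)) (k : ℕ) : cpairs (l.rotate k) = (cpairs l).rotate k := by
  induction k with
  | zero => simp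
  | succ k ih => rw [← rotate_rotate, cpairs_rotate_one, ih, rotate_rotate]

lemma edgeWeights_rotate (c : List (Fin n)) (k : ℕ) :
    edgeWeights w (c.rotate k) = (edgeWeights w c).rotate k := by
  rw [edgeWeights, cpairs_rotate, map_rotate, edgeWeights]

lemma sum_edgeWeights_cons (u : Fin n) (l : List (Fin n)) :
    (edgeWeights w (u :: l)).sum = pathWeight w (u :: l ++ [u]) := by
  rw [edgeWeights, cpairs_cons]
  suffices ∀ a, (((a :: l).zip (l ++ [u])).map fun p => edgeWeight w p.1 p.2).sum =
      pathWeight w (a :: l ++ [u]) from this u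
  induction l with
  | nil => simp [pathWeight]
  | cons b l ih => intro a; simp [pathWeight, ih b]

lemma IsCycle.cycWeight_eq {c : List (Fin n)} (hc : IsCycle w c) :
    cycWeight w c = ((edgeWeights w c).sum : WithBot ℝ) := by
  rw [cycWeight, edgeWeights, ← WithBot.coe_addHom, map_list_sum, map_map]
  exact congrArg sum (map_congr_left fun p hp => (coe_edgeWeight (hc.2.2 p hp)).symm)

lemma IsCycle.rotate {c : List (Fin n)} (hc : IsCycle w c) (k : ℕ) : IsCycle w (c.rotate k) := by
  refine ⟨by simpa using hc.1, nodup_rotate.2 hc.2.1, fun p hp => hc.2.2 p ?_⟩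
  rw [cpairs_rotate] at hp
  exact (rotate_perm _ k).mem_iff.mp hp

lemma MAscending.rotate {c : List (Fin n)} (hc : MAscending w c) (k : ℕ) :
    MAscending w (c.rotate k) := by
  refine ⟨hc.1.rotate k, ?_⟩
  rw [(hc.1.rotate k).cycWeight_eq, edgeWeights_rotate, (rotate_perm _ k).sum_eq,
    ← hc.1.cycWeight_eq]
  exact hc.2

lemma IsCycle.skip {u x₁ x₂ v : Fin n} {t : List (Fin n)}
    (hc : IsCycle w (u :: x₁ :: x₂ :: v :: t)) (huv : w u v ≠ ⊥) : IsCycle w (u :: v :: t) := by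
  refine ⟨by simp, (((Sublist.refl _).cons x₂).cons x₁).cons_cons u |>.nodup hc.2.1, ?_⟩
  have hedges := hc.2.2
  simp only [cpairs_cons, cons_append, zip_cons_cons, forall_mem_cons] at hedges ⊢
  exact ⟨huv, hedges.2.2.2⟩

lemma IsCycle.closeUp {u x₁ x₂ v : Fin n} {t : List (Fin n)}
    (hc : IsCycle w (u :: x₁ :: x₂ :: v :: t)) (hvu : w v u ≠ ⊥) : IsCycle w [u, x₁, x₂, v] := by
  have hsub : [u, x₁, x₂, v] <+ u :: x₁ :: x₂ :: v :: t :=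
    (((nil_sublist t).cons_cons v).cons_cons x₂).cons_cons x₁ |>.cons_cons u
  refine ⟨by simp, hsub.nodup hc.2.1, ?_⟩
  have hedges := hc.2.2
  simp only [cpairs_cons, cons_append, zip_cons_cons, forall_mem_cons] at hedges ⊢
  simpa [hvu] using ⟨hedges.1, hedges.2.1, hedges.2.2.1⟩

lemma MAscending.sum_edgeWeights_nonneg {c : List (Fin n)} (hc : MAscending w c) :
    0 ≤ (edgeWeights w c).sum := by
  have := hc.2
  rwa [hc.1.cycWeight_eq, WithBot.coe_nonneg] at this

def IsShortestMAscending (w : Fin n → Fin n → WithBot ℝ) (c : List (Fin n)) : Prop :=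
  MAscending w c ∧ ∀ c', MAscending w c' → c.length ≤ c'.length

lemma exists_isShortestMAscending (h : ∃ c, MAscending w c) :
    ∃ c, IsShortestMAscending w c := by
  obtain ⟨c, hc, hmin⟩ := (measure (List.length (α := Fin n))).wf.has_min _ h
  exact ⟨c, hc, fun c' hc' => not_lt.mp (hmin c' hc')⟩

lemma IsShortestMAscending.rotate {c : List (Fin n)} (hc : IsShortestMAscending w c) (k : ℕ) :
    IsShortestMAscending w (c.rotate k) :=
  ⟨hc.1.rotate k, by simpa using hc.2⟩

lemma IsShortestMAscending.sum_edgeWeights_neg {c c' : List (Fin n)}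
    (hc : IsShortestMAscending w c) (hc' : IsCycle w c') (hlt : c'.length < c.length) :
    (edgeWeights w c').sum < 0 := by
  by_contra! hnonneg
  exact (hc.2 c' ⟨hc', by rw [hc'.cycWeight_eq]; exact_mod_cast hnonneg⟩).not_gt hlt

lemma IsShortestMAscending.window (hw : IsSemiorderWeight w) {u x₁ x₂ v : Fin n}
    {t : List (Fin n)} (hc : IsShortestMAscending w (u :: x₁ :: x₂ :: v :: t)) (ht : t ≠ []) :
    (edgeWeight w u x₁ = 1 ∧ edgeWeight w x₁ x₂ = 1 ∧
        (edgeWeights w (u :: x₁ :: x₂ :: v :: t)).sum < 2) ∨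
      (edgeWeight w u x₁ = -1 ∧ edgeWeight w x₁ x₂ = -1) := by
  have hcyc := hc.1.1
  have hnodup := hcyc.2.1
  have hedges := hcyc.2.2
  simp only [nodup_cons, mem_cons, not_or] at hnodup
  simp only [cpairs_cons, cons_append, zip_cons_cons, forall_mem_cons] at hedges
  have ha := hw.edgeWeight_eq_one_or_neg_one hnodup.1.1 hedges.1
  have hb := hw.edgeWeight_eq_one_or_neg_one hnodup.2.1.1 hedges.2.1
  have hd := hw.edgeWeight_eq_one_or_neg_one hnodup.2.2.1.1 hedges.2.2.1
  set R := pathWeight w (v :: t ++ [u])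
  have hS : (edgeWeights w (u :: x₁ :: x₂ :: v :: t)).sum =
      edgeWeight w u x₁ + edgeWeight w x₁ x₂ + edgeWeight w x₂ v + R := by
    simp only [sum_edgeWeights_cons, cons_append, pathWeight, R]; ring
  have hS₀ := hc.1.sum_edgeWeights_nonneg
  have hskip (huv : w u v ≠ ⊥) : edgeWeight w u v + R < 0 := by
    have := hc.sum_edgeWeights_neg (hcyc.skip huv) (by simp)
    simpa [sum_edgeWeights_cons, pathWeight, R] using this
  have hclose (hvu : w v u ≠ ⊥) :
      edgeWeight w u x₁ + edgeWeight w x₁ x₂ + edgeWeight w x₂ v + edgeWeight w v u < 0 := by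
    have := hc.sum_edgeWeights_neg (hcyc.closeUp hvu) (by simp [length_pos_iff.mpr ht])
    simpa [sum_edgeWeights_cons, pathWeight, add_assoc] using this
  have hchord : 1 + R < 0 ∨
      edgeWeight w u x₁ + edgeWeight w x₁ x₂ + edgeWeight w x₂ v + 1 < 0 ∨
      (R - 1 < 0 ∧ edgeWeight w u x₁ + edgeWeight w x₁ x₂ + edgeWeight w x₂ v - 1 < 0) := by
    rcases hw.of_ne hnodup.1.2.2.1 with ⟨huv, -⟩ | ⟨-, hvu⟩ | ⟨huv, hvu⟩
    · have := hskip (by simp [huv])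
      rw [edgeWeight_of_eq huv] at this
      exact .inl this
    · have := hclose (by simp [hvu])
      rw [edgeWeight_of_eq hvu] at this
      exact .inr (.inl this)
    · have h₁ := hskip (by simp [huv])
      have h₂ := hclose (by simp [hvu])
      rw [edgeWeight_of_eq huv] at h₁
      rw [edgeWeight_of_eq hvu] at h₂
      exact .inr (.inr ⟨by linarith, by linarith⟩)
  rcases three_signs ha hb hd with ⟨ha, hb, hd⟩ | ⟨ha, hb, -⟩ | hsum | hsum
  · exact .inl ⟨ha, hb, by rcases hchord with h | h | ⟨h, h'⟩ <;> linarith⟩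
  · exact .inr ⟨ha, hb⟩
  all_goals exfalso; rcases hchord with h | h | ⟨h, h'⟩ <;> linarith

lemma IsShortestMAscending.edgeWeights_eq (hw : IsSemiorderWeight w) {c : List (Fin n)}
    (hc : IsShortestMAscending w c) (h5 : 5 ≤ c.length) :
    ∃ r, (edgeWeights w c = 1 :: 1 :: r ∧ (edgeWeights w c).sum < 2) ∨
      edgeWeights w c = -1 :: -1 :: r := by
  match c, hc, h5 with
  | u :: x₁ :: x₂ :: v :: s :: t, hc, _ =>
    obtain ⟨r, hr⟩ : ∃ r, edgeWeights w (u :: x₁ :: x₂ :: v :: s :: t) =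
        edgeWeight w u x₁ :: edgeWeight w x₁ x₂ :: r := by
      simp [edgeWeights, cpairs_cons]
    rcases hc.window hw (cons_ne_nil s t) with ⟨ha, hb, hsum⟩ | ⟨ha, hb⟩
    · exact ⟨r, .inl ⟨by rw [hr, ha, hb], hsum⟩⟩
    · exact ⟨r, .inr (by rw [hr, ha, hb])⟩

lemma IsShortestMAscending.length_le_four (hw : IsSemiorderWeight w) {c : List (Fin n)}
    (hc : IsShortestMAscending w c) : c.length ≤ 4 := by
  by_contra! hlong
  have hlen : (edgeWeights w c).length = c.length := by simp [edgeWeights, cpairs]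
  have hconst : (edgeWeights w c).IsChain (· = ·) := by
    refine isChain_iff_getElem.mpr fun k hk => ?_
    have hlong_rot : 5 ≤ (c.rotate k).length := by rw [length_rotate]; exact hlong
    obtain ⟨r, ⟨hr, -⟩ | hr⟩ := (hc.rotate k).edgeWeights_eq hw hlong_rot <;>
      rw [edgeWeights_rotate] at hr <;> exact getElem_eq_getElem_succ_of_rotate_eq hk hr
  have hfive : (5 : ℝ) ≤ c.length := by exact_mod_cast hlong
  obtain ⟨r, ⟨hr, hsum⟩ | hr⟩ := hc.edgeWeights_eq hw hlong
  · have hrep := isChain_eq_iff_eq_replicate.mp hconst 1 (by simp [hr])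
    rw [hrep, sum_replicate, hlen, nsmul_one] at hsum
    linarith
  · have hrep := isChain_eq_iff_eq_replicate.mp hconst (-1) (by simp [hr])
    have hS₀ := hc.1.sum_edgeWeights_nonneg
    rw [hrep, sum_replicate, hlen, nsmul_eq_mul] at hS₀
    linarith

end

theorem stmt3_general (n : ℕ) (w : Fin n → Fin n → WithBot ℝ)
    (hw : ∀ i j : Fin n, i < j →
      ((w i j = ((1 : ℝ) : WithBot ℝ) ∧ w j i = ⊥) ∨
       (w i j = ⊥ ∧ w j i = ((1 : ℝ) : WithBot ℝ)) ∨
       (w i j = ((-1 : ℝ) : WithBot ℝ) ∧ w j i = ((-1 : ℝ) : WithBot ℝ))))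
    (hasc : ∃ c : List (Fin n), MAscending w c) :
    ∃ c : List (Fin n), MAscending w c ∧ c.length ≤ 4 := by
  obtain ⟨c, hc⟩ := exists_isShortestMAscending hasc
  exact ⟨c, hc.1, hc.length_le_four hw⟩

theorem stmt3 (n : ℕ) (hn : 1 ≤ n) (w : Fin n → Fin n → WithBot ℝ)
    (hw : ∀ i j : Fin n, i < j →
      ((w i j = ((1 : ℝ) : WithBot ℝ) ∧ w j i = ⊥) ∨
       (w i j = ⊥ ∧ w j i = ((1 : ℝ) : WithBot ℝ)) ∨
       (w i j = ((-1 : ℝ) : WithBot ℝ) ∧ w j i = ((-1 : ℝ) : WithBot ℝ))))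
    (hasc : ∃ c : List (Fin n), MAscending w c) :
    ∃ c : List (Fin n), MAscending w c ∧ c.length ≤ 4 :=
  stmt3_general n w hw hasc
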